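/- Let H be a graded commutative 𝔽₂-algebra with additive operations Sq¹, Sq² such that Sq¹ vanishes on H¹, Sq² vanishes on H¹, and the Cartan formula Sq²(ab) = Sq²(a)b + Sq¹(a)Sq¹(b) + aSq²(b) holds. Suppose w₂ ∈ H² satisfies Sq²(y) = w₂·y for all y ∈ H³, and suppose the pairing H¹ ⊗ H⁴ → H⁵ is non-degenerate in the sense that an element u ∈ H⁴ is zero whenever a·u = 0 for all a ∈ H¹. Then Sq²(x) = w₂·x for all x ∈ H². -/
import Mathlib


/-- In a graded commutative `𝔽₂`-algebra in which `Sq¹` and `Sq²` vanish in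
degree 1 and the Cartan formula holds, if `Sq²(y) = w₂·y` for all `y` of
degree 3 and the pairing `H¹ ⊗ H⁴ → H⁵` is non-degenerate, then
`Sq²(x) = w₂·x` for all `x` of degree 2. -/
theorem stmt_13 (R : Type) [CommRing R] [Algebra (ZMod 2) R]
    (𝒜 : ℕ → Submodule (ZMod 2) R) [GradedRing 𝒜]
    (Sq1 Sq2 : R →+ R)
    (hSq1mem : ∀ (i : ℕ) (x : R), x ∈ 𝒜 i → Sq1 x ∈ 𝒜 (i + 1))
    (hSq2mem : ∀ (i : ℕ) (x : R), x ∈ 𝒜 i → Sq2 x ∈ 𝒜 (i + 2))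
    (hSq1deg1 : ∀ x ∈ 𝒜 1, Sq1 x = 0)
    (hSq2deg1 : ∀ x ∈ 𝒜 1, Sq2 x = 0)
    (hcartan : ∀ a b : R, Sq2 (a * b) = Sq2 a * b + Sq1 a * Sq1 b + a * Sq2 b)
    (w₂ : R) (hw₂ : w₂ ∈ 𝒜 2)
    (hSq2H3 : ∀ y ∈ 𝒜 3, Sq2 y = w₂ * y)
    (hnondeg : ∀ u ∈ 𝒜 4, (∀ a ∈ 𝒜 1, a * u = 0) → u = 0) :
    ∀ x ∈ 𝒜 2, Sq2 x = w₂ * x := by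
  intro x hx
  have hu : Sq2 x - w₂ * x ∈ 𝒜 4 := by
    exact Submodule.sub_mem _ (hSq2mem 2 x hx) (SetLike.mul_mem_graded hw₂ hx)
  have key : ∀ a ∈ 𝒜 1, a * (Sq2 x - w₂ * x) = 0 := by
    intro a ha
    have h1 : Sq2 (a * x) = a * Sq2 x := by
      rw [hcartan, hSq2deg1 a ha, hSq1deg1 a ha, zero_mul, zero_mul, zero_add,
        zero_add]
    have h2 : Sq2 (a * x) = w₂ * (a * x) :=
      hSq2H3 _ (SetLike.mul_mem_graded ha hx)
    rw [mul_sub]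
    rw [← h1, h2]
    ring
  have := hnondeg _ hu key
  linear_combination this
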